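/- arXiv:2504.10088 — 2 statements merged into one kernel-verified Lean document; each statement's English description precedes it below -/
import Mathlib

section
/- Let d = 2t+2 for a natural number t. Then A_b(n,d,q) ≤ q^n / (B_b(n,t) + S_b(n,t+1)/A_b(n,d,t+1,q)). -/
set_option linter.unusedSectionVars false
set_option linter.unusedVariables false
set_option linter.unusedTactic false
open Finset

/-- Cyclic coordinate access: `cget z k` is the coordinate `z_k`, indices taken mod `n`. -/
def cget {Fq : Type*} [Zero Fq] {n : ℕ} (y : Fin n → Fq) (k : ℕ) : Fq :=
  if h : n = 0 then 0 else y ⟨k % n, Nat.mod_lt k (Nat.pos_of_ne_zero h)⟩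

/-- The `b`-symbol weight of a vector `y ∈ Fq^n`. -/
def wtb {Fq : Type*} [Zero Fq] [DecidableEq Fq] {n : ℕ} (b : ℕ) (y : Fin n → Fq) : ℕ :=
  ((Finset.range n).filter fun i => ∃ j : Fin b, cget y (i + j) ≠ 0).card

/-- The `b`-symbol distance on `Fq^n`. -/
def db {Fq : Type*} [Field Fq] [DecidableEq Fq] {n : ℕ} (b : ℕ) (x y : Fin n → Fq) : ℕ :=
  wtb b (x - y)

/-- Cardinality of a `b`-ball of radius `r` in `Fq^n` (centered at `0`;
it is independent of the center). -/
def ballCard (Fq : Type*) [Field Fq] [Fintype Fq] [DecidableEq Fq] (n b r : ℕ) : ℕ :=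
  (Finset.univ.filter fun y : Fin n → Fq => db b y 0 ≤ r).card

/-- Cardinality of a `b`-sphere of radius `r` in `Fq^n`. -/
def sphereCard (Fq : Type*) [Field Fq] [Fintype Fq] [DecidableEq Fq] (n b r : ℕ) : ℕ :=
  (Finset.univ.filter fun y : Fin n → Fq => db b y 0 = r).card

/-- `Asize Fq n b d` : the largest size of a code in `Fq^n` with minimum `b`-symbol
distance at least `d`. -/
noncomputable def Asize (Fq : Type*) [Field Fq] [Fintype Fq] [DecidableEq Fq] (n b d : ℕ) : ℕ :=
  sSup {M | ∃ C : Finset (Fin n → Fq),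
    (∀ x ∈ C, ∀ y ∈ C, x ≠ y → d ≤ db b x y) ∧ C.card = M}

/-- `Awsize Fq n b d w` : the largest size of a code in `Fq^n` with minimum `b`-symbol
distance at least `d` all of whose codewords have `b`-symbol weight exactly `w`. -/
noncomputable def Awsize (Fq : Type*) [Field Fq] [Fintype Fq] [DecidableEq Fq] (n b d w : ℕ) : ℕ :=
  sSup {M | ∃ C : Finset (Fin n → Fq),
    (∀ x ∈ C, ∀ y ∈ C, x ≠ y → d ≤ db b x y) ∧ (∀ x ∈ C, wtb b x = w) ∧ C.card = M}

section lems
variable {Fq : Type*} [Field Fq] [DecidableEq Fq] {n b : ℕ}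

lemma cget_add (x y : Fin n → Fq) (k : ℕ) : cget (x + y) k = cget x k + cget y k := by
  unfold cget; split <;> simp

lemma cget_neg (x : Fin n → Fq) (k : ℕ) : cget (-x) k = - cget x k := by
  unfold cget; split <;> simp

lemma wtb_add_le (x y : Fin n → Fq) : wtb b (x + y) ≤ wtb b x + wtb b y := by
  unfold wtb
  refine le_trans (card_le_card ?_) (card_union_le _ _)
  intro i hi
  simp only [mem_filter, mem_union, mem_range] at *
  obtain ⟨hin, j, hj⟩ := hi
  rw [cget_add] at hj
  by_cases h : cget x (i + j) = 0
  · exact Or.inr ⟨hin, j, fun h' => hj (by rw [h, h', add_zero])⟩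
  · exact Or.inl ⟨hin, j, h⟩

lemma wtb_neg (x : Fin n → Fq) : wtb b (-x) = wtb b x := by
  unfold wtb
  congr 1
  apply filter_congr
  intro i _
  simp [cget_neg]

lemma wtb_zero : wtb b (0 : Fin n → Fq) = 0 := by
  unfold wtb
  rw [card_eq_zero, filter_eq_empty_iff]
  intro i _
  simp only [not_exists, not_not, ne_eq]
  intro j
  unfold cget; split <;> simp

lemma db_comm (x y : Fin n → Fq) : db b x y = db b y x := by
  unfold db; rw [← wtb_neg (x - y), neg_sub]

lemma db_triangle (x y z : Fin n → Fq) : db b x z ≤ db b x y + db b y z := by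
  unfold db
  have h : x - z = (x - y) + (y - z) := by ring
  rw [h]; exact wtb_add_le _ _

lemma db_sub_right (x y z : Fin n → Fq) : db b (x - z) (y - z) = db b x y := by
  unfold db; congr 1; ring

lemma db_zero_right (x : Fin n → Fq) : db b x 0 = wtb b x := by
  unfold db; rw [sub_zero]

end lems

section lems2
variable {Fq : Type*} [Field Fq] [DecidableEq Fq] [Fintype Fq] {n b : ℕ}

lemma db_sub_zero (y c : Fin n → Fq) : db b (y - c) 0 = db b y c := by
  unfold db; rw [sub_zero]

lemma filter_db_card (c : Fin n → Fq) (p : ℕ → Prop) [DecidablePred p] :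
    (univ.filter fun y : Fin n → Fq => p (db b y c)).card
      = (univ.filter fun y : Fin n → Fq => p (db b y 0)).card := by
  apply card_bij' (fun y _ => y - c) (fun y _ => y + c)
  · intro y hy
    simp only [mem_filter, mem_univ, true_and] at *
    rwa [db_sub_zero]
  · intro y hy
    simp only [mem_filter, mem_univ, true_and] at *
    rwa [← db_sub_zero (y + c) c, add_sub_cancel_right]
  · intro y _; exact sub_add_cancel y c
  · intro y _; exact add_sub_cancel_right y c

end lems2

/-- Theorem 4.1 (Johnson bound, even minimum distance `d = 2t+2`). -/
theorem johnson_bound_even {Fq : Type*} [Field Fq] [Fintype Fq] [DecidableEq Fq]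
    {n b t : ℕ} (hn : 0 < n) :
    (Asize Fq n b (2 * t + 2) : ℝ) ≤
      (Fintype.card Fq : ℝ) ^ n /
        ((ballCard Fq n b t : ℝ) +
          (sphereCard Fq n b (t + 1) : ℝ) / (Awsize Fq n b (2 * t + 2) (t + 1) : ℝ)) := by
    classical
  -- extract an optimal code
  have hbddA : BddAbove {M | ∃ C : Finset (Fin n → Fq),
      (∀ x ∈ C, ∀ y ∈ C, x ≠ y → 2 * t + 2 ≤ db b x y) ∧ C.card = M} := by
    refine ⟨Fintype.card (Fin n → Fq), ?_⟩
    rintro M ⟨C, -, rfl⟩; exact card_le_univ C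
  have hneA : ({M | ∃ C : Finset (Fin n → Fq),
      (∀ x ∈ C, ∀ y ∈ C, x ≠ y → 2 * t + 2 ≤ db b x y) ∧ C.card = M}).Nonempty :=
    ⟨0, ∅, by simp, by simp⟩
  obtain ⟨C, hC, hCcard⟩ : ∃ C : Finset (Fin n → Fq),
      (∀ x ∈ C, ∀ y ∈ C, x ≠ y → 2 * t + 2 ≤ db b x y) ∧
        C.card = Asize Fq n b (2 * t + 2) := Nat.sSup_mem hneA hbddA
  set M := Asize Fq n b (2 * t + 2) with hM
  set B := ballCard Fq n b t with hB
  set S := sphereCard Fq n b (t + 1) with hS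
  set Aw := Awsize Fq n b (2 * t + 2) (t + 1) with hAw
  set Ball : (Fin n → Fq) → Finset (Fin n → Fq) :=
    fun c => univ.filter fun y => db b y c ≤ t with hBall
  set T : Finset (Fin n → Fq) :=
    univ.filter fun y => ∃ c ∈ C, db b y c = t + 1 with hT
  -- disjointness of balls
  have hdisj : ∀ c ∈ C, ∀ c' ∈ C, c ≠ c' → Disjoint (Ball c) (Ball c') := by
    intro c hc c' hc' hne
    rw [Finset.disjoint_left]
    intro y hy hy'
    rw [hBall, mem_filter] at hy hy'
    have h1 := hC c hc c' hc' hne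
    have h2 := db_triangle (b := b) c y c'
    rw [db_comm c y] at h2
    omega
  have hdisjT : Disjoint (C.biUnion Ball) T := by
    rw [Finset.disjoint_left]
    intro y hy hyT
    rw [mem_biUnion] at hy
    obtain ⟨c, hc, hyc⟩ := hy
    rw [hBall, mem_filter] at hyc
    rw [hT, mem_filter] at hyT
    obtain ⟨-, c', hc', hyc'⟩ := hyT
    by_cases h : c = c'
    · subst h; omega
    · have h1 := hC c hc c' hc' h
      have h2 := db_triangle (b := b) c y c'
      rw [db_comm c y] at h2
      omega
  -- packing bound
  have hpack : M * B + T.card ≤ Fintype.card Fq ^ n := by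
    have hb : (C.biUnion Ball).card = M * B := by
      rw [card_biUnion hdisj,
        Finset.sum_congr rfl
          (fun c _ => (filter_db_card c (fun m => m ≤ t)).trans rfl),
        sum_const, hCcard, smul_eq_mul]
      rfl
    calc M * B + T.card = ((C.biUnion Ball) ∪ T).card := by
          rw [card_union_of_disjoint hdisjT, hb]
      _ ≤ (univ : Finset (Fin n → Fq)).card := card_le_card (subset_univ _)
      _ = Fintype.card Fq ^ n := by
          rw [card_univ, Fintype.card_fun, Fintype.card_fin]
  -- bound on number of codewords at distance t+1 from a given point
  have hbddW : BddAbove {M | ∃ C : Finset (Fin n → Fq),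
      (∀ x ∈ C, ∀ y ∈ C, x ≠ y → 2 * t + 2 ≤ db b x y) ∧
      (∀ x ∈ C, wtb b x = t + 1) ∧ C.card = M} := by
    refine ⟨Fintype.card (Fin n → Fq), ?_⟩
    rintro M ⟨C, -, -, rfl⟩; exact card_le_univ C
  have hAwbound : ∀ y : Fin n → Fq,
      (C.filter fun c => db b y c = t + 1).card ≤ Aw := by
    intro y
    apply le_csSup hbddW
    refine ⟨(C.filter fun c => db b y c = t + 1).image (fun c => c - y), ?_, ?_, ?_⟩
    · intro u hu v hv huv
      simp only [mem_image, mem_filter] at hu hv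
      obtain ⟨c, ⟨hc, -⟩, rfl⟩ := hu
      obtain ⟨c', ⟨hc', -⟩, rfl⟩ := hv
      rw [db_sub_right]
      exact hC c hc c' hc' (fun h => huv (by rw [h]))
    · intro x hx
      simp only [mem_image, mem_filter] at hx
      obtain ⟨c, ⟨hc, hdc⟩, rfl⟩ := hx
      show db b c y = t + 1
      rw [db_comm]; exact hdc
    · apply card_image_of_injective
      exact sub_left_injective
  -- double counting
  have hMS : M * S = ∑ y : Fin n → Fq, (C.filter fun c => db b y c = t + 1).card := by
    calc M * S = ∑ c ∈ C, (univ.filter fun y : Fin n → Fq => db b y c = t + 1).card := by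
          rw [Finset.sum_congr rfl
            (fun c _ => (filter_db_card c (fun m => m = t + 1)).trans rfl),
            sum_const, hCcard, smul_eq_mul]
          rfl
      _ = ∑ c ∈ C, ∑ y : Fin n → Fq, if db b y c = t + 1 then 1 else 0 :=
          Finset.sum_congr rfl (fun c _ => Finset.card_filter _ _)
      _ = ∑ y : Fin n → Fq, ∑ c ∈ C, if db b y c = t + 1 then 1 else 0 := Finset.sum_comm
      _ = _ := Finset.sum_congr rfl (fun y _ => (Finset.card_filter _ _).symm)
  have hsum2 : ∑ y : Fin n → Fq, (C.filter fun c => db b y c = t + 1).card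
      = ∑ y ∈ T, (C.filter fun c => db b y c = t + 1).card := by
    symm
    apply Finset.sum_subset (subset_univ _)
    intro y _ hyT
    rw [card_eq_zero, filter_eq_empty_iff]
    intro c hc h
    exact hyT (by rw [hT, mem_filter]; exact ⟨mem_univ _, c, hc, h⟩)
  have hcnt : M * S ≤ T.card * Aw := by
    rw [hMS, hsum2]
    calc ∑ y ∈ T, (C.filter fun c => db b y c = t + 1).card
        ≤ ∑ _y ∈ T, Aw := Finset.sum_le_sum (fun y _ => hAwbound y)
      _ = T.card * Aw := by rw [sum_const, smul_eq_mul]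
  have hB1 : 1 ≤ B := by
    rw [hB]
    refine Finset.card_pos.2 ⟨0, mem_filter.2 ⟨mem_univ _, ?_⟩⟩
    rw [db_zero_right, wtb_zero]
    exact Nat.zero_le t
  -- real arithmetic
  have hBpos : (0 : ℝ) < (B : ℝ) := by exact_mod_cast hB1
  have hden : (0 : ℝ) < (B : ℝ) + (S : ℝ) / (Aw : ℝ) :=
    lt_add_of_lt_of_nonneg hBpos (div_nonneg (Nat.cast_nonneg _) (Nat.cast_nonneg _))
  rw [le_div_iff₀ hden]
  have h2 : (M : ℝ) * ((S : ℝ) / (Aw : ℝ)) ≤ (T.card : ℝ) := by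
    rcases Nat.eq_zero_or_pos Aw with h | h
    · simp [h]
    · have hApos : (0 : ℝ) < (Aw : ℝ) := by exact_mod_cast h
      rw [← mul_div_assoc, div_le_iff₀ hApos]
      exact_mod_cast hcnt
  have h1 : (M : ℝ) * (B : ℝ) + (T.card : ℝ) ≤ (Fintype.card Fq : ℝ) ^ n := by
    have := hpack
    push_cast
    exact_mod_cast hpack
  calc (M : ℝ) * ((B : ℝ) + (S : ℝ) / (Aw : ℝ))
      = (M : ℝ) * (B : ℝ) + (M : ℝ) * ((S : ℝ) / (Aw : ℝ)) := by ring
    _ ≤ (M : ℝ) * (B : ℝ) + (T.card : ℝ) := by linarith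
    _ ≤ (Fintype.card Fq : ℝ) ^ n := h1
end

section
/- (Restricted Johnson bound for b-symbol distance) Let n, d, w be positive integers such that d - 2w + q^b w^2 / ((q^b - 1) n) > 0. Then A_b(n,d,w,q) ≤ ⌊ d / (d - 2w + q^b w^2 / ((q^b-1)n)) ⌋. -/
/-!
Reading a word of `F_q^n` through a cyclic window of length `b` turns it into a word of
`(F_q^b)^n` whose Hamming weight and distance are its `b`-symbol weight and distance, so it
suffices to prove the restricted Johnson bound for Hamming constant-weight codes over an
alphabet of size `Q`. For a code of size `M` and minimum distance `d`, the sum `S` of all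
pairwise distances is at least `M (M - 1) d`. Counted column by column it equals
`∑ i, (M² - ∑ a, m i a ²)`, where `m i a` is the number of codewords with symbol `a` at
position `i`; Cauchy–Schwarz over the `Q - 1` nonzero symbols, and then over the `n`
positions (the column weights sum to `M w`), bounds it by `2 M² w - Q M² w² / ((Q - 1) n)`.
Comparing the two bounds gives the claim.
-/

open Finset

section HammingJohnson

variable {α ι A : Type*} [Fintype ι] [DecidableEq A]

theorem card_offDiag_mul_le_sum_sum_hammingDist {d : ℕ} (C : Finset (ι → A))
    (hC : ∀ x ∈ C, ∀ y ∈ C, x ≠ y → d ≤ hammingDist x y) :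
    #C.offDiag * d ≤ ∑ x ∈ C, ∑ y ∈ C, hammingDist x y :=
  calc #C.offDiag * d = ∑ p ∈ C.offDiag, d := by rw [sum_const, smul_eq_mul]
    _ ≤ ∑ p ∈ C.offDiag, hammingDist p.1 p.2 := sum_le_sum fun p hp => by
        obtain ⟨hx, hy, hxy⟩ := mem_offDiag.1 hp
        exact hC _ hx _ hy hxy
    _ ≤ ∑ p ∈ C ×ˢ C, hammingDist p.1 p.2 := sum_le_sum_of_subset
        (subset_union_right.trans (diag_union_offDiag (s := C)).subset)
    _ = ∑ x ∈ C, ∑ y ∈ C, hammingDist x y := sum_product _ _ _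

theorem sum_card_filter_apply_ne_zero_eq_sum_hammingNorm [Zero A] (C : Finset (ι → A)) :
    ∑ i, #{x ∈ C | x i ≠ 0} = ∑ x ∈ C, hammingNorm x := by
  simp only [hammingNorm, card_filter]
  exact sum_comm

variable [Fintype A]

theorem sq_add_sq_sum_erase_div_le_sum_sq (m : A → ℝ) (z : A) :
    m z ^ 2 + (∑ a ∈ univ.erase z, m a) ^ 2 / (Fintype.card A - 1) ≤ ∑ a, m a ^ 2 := by
  have hcs := sq_sum_le_card_mul_sum_sq (s := univ.erase z) (f := m)
  rw [card_erase_of_mem (mem_univ z), card_univ,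
    Nat.cast_sub (Fintype.card_pos_iff.2 ⟨z⟩), Nat.cast_one] at hcs
  rw [← add_sum_erase univ _ (mem_univ z)]
  gcongr
  exact div_le_of_le_mul₀ (sub_nonneg.2 (Nat.one_le_cast.2 (Fintype.card_pos_iff.2 ⟨z⟩)))
    (sum_nonneg fun a _ => sq_nonneg (m a)) (by linarith)

theorem sum_card_filter_apply_eq_eq_sum_sq (s : Finset α) (g : α → A) :
    ∑ x ∈ s, #{y ∈ s | g y = g x} = ∑ a, #{x ∈ s | g x = a} ^ 2 := by
  rw [← sum_fiberwise' s g (fun a => #{y ∈ s | g y = a})]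
  simp only [sum_const, smul_eq_mul, sq]

theorem card_sq_sub_sum_sq_card_fiber_le (s : Finset α) (g : α → A) (z : A) :
    (#s : ℝ) ^ 2 - ∑ a, (#{x ∈ s | g x = a} : ℝ) ^ 2 ≤
      2 * #s * #{x ∈ s | g x ≠ z} - (#{x ∈ s | g x ≠ z} : ℝ) ^ 2 -
        (#{x ∈ s | g x ≠ z} : ℝ) ^ 2 / (Fintype.card A - 1) := by
  have hz : (#{x ∈ s | g x = z} : ℝ) = #s - #{x ∈ s | g x ≠ z} := by
    rw [eq_sub_iff_add_eq]; exact_mod_cast card_filter_add_card_filter_not _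
  set e : ℝ := ((#{x ∈ s | g x ≠ z} : ℕ) : ℝ)
  have htotal : ∑ a, (#{x ∈ s | g x = a} : ℝ) = #s := by
    exact_mod_cast (card_eq_sum_card_fiberwise fun x _ => mem_coe.2 (mem_univ (g x))).symm
  have herase : ∑ a ∈ univ.erase z, (#{x ∈ s | g x = a} : ℝ) = e := by
    rw [← add_sum_erase univ _ (mem_univ z), hz] at htotal
    linarith
  have h := sq_add_sq_sum_erase_div_le_sum_sq (fun a => (#{x ∈ s | g x = a} : ℝ)) z
  rw [hz, herase] at h
  linear_combination h

theorem sum_sum_hammingDist_add_sum_sum_sq_card_fiber (C : Finset (ι → A)) :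
    ∑ x ∈ C, ∑ y ∈ C, hammingDist x y + ∑ i, ∑ a, #{x ∈ C | x i = a} ^ 2 =
      Fintype.card ι * #C ^ 2 := by
  have hcolumns : ∑ x ∈ C, ∑ y ∈ C, hammingDist x y =
      ∑ i, ∑ x ∈ C, #{y ∈ C | ¬ y i = x i} := by
    rw [sum_comm]
    simp only [hammingDist, card_filter, ne_eq]
    exact (sum_congr rfl fun _ _ => sum_comm).trans sum_comm
  rw [add_comm, hcolumns, ← sum_add_distrib]
  simp only [← sum_card_filter_apply_eq_eq_sum_sq C, ← sum_add_distrib,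
    card_filter_add_card_filter_not]
  rw [sum_const, sum_const, card_univ, smul_eq_mul, smul_eq_mul, sq]

theorem sum_sum_hammingDist_le [Zero A] (hA : 1 < Fintype.card A) (C : Finset (ι → A)) :
    ∑ x ∈ C, ∑ y ∈ C, (hammingDist x y : ℝ) ≤
      ∑ i, (2 * #C * #{x ∈ C | x i ≠ 0} -
        Fintype.card A / (Fintype.card A - 1) * (#{x ∈ C | x i ≠ 0} : ℝ) ^ 2) := by
  have hS : ∑ x ∈ C, ∑ y ∈ C, (hammingDist x y : ℝ) =
      ∑ i, ((#C : ℝ) ^ 2 - ∑ a, (#{x ∈ C | x i = a} : ℝ) ^ 2) := by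
    rw [sum_sub_distrib, sum_const, card_univ, nsmul_eq_mul, eq_sub_iff_add_eq]
    exact_mod_cast sum_sum_hammingDist_add_sum_sum_sq_card_fiber C
  have hQ : (Fintype.card A : ℝ) - 1 ≠ 0 := sub_ne_zero.2 (by exact_mod_cast hA.ne')
  rw [hS]
  refine sum_le_sum fun i _ => ?_
  have h := card_sq_sub_sum_sq_card_fiber_le C (fun x => x i) 0
  have hQe : ∀ e : ℝ, Fintype.card A / (Fintype.card A - 1) * e ^ 2 =
      e ^ 2 + e ^ 2 / (Fintype.card A - 1) := fun e => by
    field_simp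
    ring
  rw [hQe]
  linarith

theorem card_mul_restricted_johnson_le [Zero A] (hA : 1 < Fintype.card A) {d w : ℕ}
    (C : Finset (ι → A)) (hd : ∀ x ∈ C, ∀ y ∈ C, x ≠ y → d ≤ hammingDist x y)
    (hw : ∀ x ∈ C, hammingNorm x = w) :
    (#C : ℝ) * (d - 2 * w + Fintype.card A * w ^ 2 / ((Fintype.card A - 1) * Fintype.card ι))
      ≤ d := by
  have hlow : (#C : ℝ) * (#C - 1) * d ≤ ∑ x ∈ C, ∑ y ∈ C, (hammingDist x y : ℝ) := by
    have h := (Nat.cast_le (α := ℝ)).2 (card_offDiag_mul_le_sum_sum_hammingDist C hd)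
    push_cast [offDiag_card, Nat.cast_sub (Nat.le_mul_self _)] at h
    linarith
  have hsum_e : ∑ i, (#{x ∈ C | x i ≠ 0} : ℝ) = #C * w := by
    rw [← Nat.cast_sum, sum_card_filter_apply_ne_zero_eq_sum_hammingNorm, sum_congr rfl hw,
      sum_const, smul_eq_mul, Nat.cast_mul]
  have hup := sum_sum_hammingDist_le hA C
  have hQ : (0 : ℝ) ≤ Fintype.card A / (Fintype.card A - 1) :=
    div_nonneg (Nat.cast_nonneg _) (sub_nonneg.2 (by exact_mod_cast hA.le))
  set M : ℝ := ((#C : ℕ) : ℝ)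
  set Q : ℝ := ((Fintype.card A : ℕ) : ℝ)
  set n : ℝ := ((Fintype.card ι : ℕ) : ℝ)
  set e : ι → ℝ := fun i => ((#{x ∈ C | x i ≠ 0} : ℕ) : ℝ)
  have hcs : (M * w) ^ 2 / n ≤ ∑ i, e i ^ 2 := by
    have h := sq_sum_le_card_mul_sum_sq (s := univ) (f := e)
    rw [hsum_e, card_univ] at h
    exact div_le_of_le_mul₀ (Nat.cast_nonneg _) (sum_nonneg fun i _ => sq_nonneg (e i))
      (by linarith)
  have key : M * (M - 1) * d ≤ 2 * M * (M * w) - M ^ 2 * (Q * w ^ 2 / ((Q - 1) * n)) :=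
    calc M * (M - 1) * d ≤ ∑ i, (2 * M * e i - Q / (Q - 1) * e i ^ 2) := hlow.trans hup
      _ = 2 * M * (M * w) - Q / (Q - 1) * ∑ i, e i ^ 2 := by
        rw [sum_sub_distrib, ← mul_sum, ← mul_sum, hsum_e]
      _ ≤ 2 * M * (M * w) - Q / (Q - 1) * ((M * w) ^ 2 / n) := by
        gcongr
      _ = 2 * M * (M * w) - M ^ 2 * (Q * w ^ 2 / ((Q - 1) * n)) := by
        rw [div_mul_div_comm, mul_div_assoc']
        ring
  rcases (show (0 : ℝ) ≤ M from Nat.cast_nonneg _).eq_or_lt with hM | hM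
  · rw [← hM, zero_mul]
    exact Nat.cast_nonneg d
  · refine le_of_mul_le_mul_left ?_ hM
    linear_combination key

end HammingJohnson

section BSymbol

variable {Fq : Type*} {n : ℕ}

def symbolRead [Zero Fq] (b : ℕ) (x : Fin n → Fq) : Fin n → Fin b → Fq :=
  fun i j => cget x (i.val + j.val)

theorem cget_sub [AddGroup Fq] (x y : Fin n → Fq) (k : ℕ) :
    cget (x - y) k = cget x k - cget y k := by
  unfold cget
  split <;> simp

theorem symbolRead_sub [AddGroup Fq] (b : ℕ) (x y : Fin n → Fq) :
    symbolRead b (x - y) = symbolRead b x - symbolRead b y := by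
  ext i j
  exact cget_sub x y _

theorem symbolRead_injective [Zero Fq] {b : ℕ} (hb : 0 < b) :
    Function.Injective (symbolRead (Fq := Fq) (n := n) b) := fun x y h => by
  ext i
  have h0 := congrFun (congrFun h i) ⟨0, hb⟩
  simpa [symbolRead, cget, i.pos.ne', Nat.mod_eq_of_lt i.isLt] using h0

theorem hammingNorm_symbolRead [Zero Fq] [DecidableEq Fq] (b : ℕ) (x : Fin n → Fq) :
    hammingNorm (symbolRead b x) = wtb b x := by
  rw [hammingNorm, wtb, card_filter, card_filter, ← Fin.sum_univ_eq_sum_range]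
  simp [symbolRead, Function.ne_iff]

theorem hammingDist_symbolRead [Field Fq] [DecidableEq Fq] (b : ℕ) (x y : Fin n → Fq) :
    hammingDist (symbolRead b x) (symbolRead b y) = db b x y := by
  rw [db, ← hammingNorm_symbolRead, symbolRead_sub]
  simp only [hammingDist, hammingNorm, Pi.sub_apply, ne_eq, sub_eq_zero]

end BSymbol

theorem exists_card_eq_Awsize (Fq : Type*) [Field Fq] [Fintype Fq] [DecidableEq Fq]
    (n b d w : ℕ) : ∃ C : Finset (Fin n → Fq), (∀ x ∈ C, ∀ y ∈ C, x ≠ y → d ≤ db b x y) ∧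
      (∀ x ∈ C, wtb b x = w) ∧ #C = Awsize Fq n b d w :=
  Nat.sSup_mem (s := {M | ∃ C : Finset (Fin n → Fq), (∀ x ∈ C, ∀ y ∈ C, x ≠ y → d ≤ db b x y) ∧
      (∀ x ∈ C, wtb b x = w) ∧ #C = M}) ⟨0, ∅, by simp⟩
    ⟨Fintype.card (Fin n → Fq), fun _ ⟨C, _, _, hC⟩ => hC ▸ card_le_univ C⟩

theorem restricted_johnson_bound_general {Fq : Type*} [Field Fq] [Fintype Fq] [DecidableEq Fq]
    {n d w b : ℕ} (hb1 : 1 ≤ b)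
    (hden : 0 < (d : ℝ) - 2 * w +
      (Fintype.card Fq : ℝ) ^ b * (w : ℝ) ^ 2 / (((Fintype.card Fq : ℝ) ^ b - 1) * n)) :
    (Awsize Fq n b d w : ℝ) ≤
      ⌊(d : ℝ) / ((d : ℝ) - 2 * w +
        (Fintype.card Fq : ℝ) ^ b * (w : ℝ) ^ 2 / (((Fintype.card Fq : ℝ) ^ b - 1) * n))⌋ := by
  obtain ⟨C, hCd, hCw, hC⟩ := exists_card_eq_Awsize Fq n b d w
  have hQ : 1 < Fintype.card (Fin b → Fq) := by
    rw [Fintype.card_fun, Fintype.card_fin]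
    exact Nat.one_lt_pow (by omega) Fintype.one_lt_card
  have hjohnson := card_mul_restricted_johnson_le hQ (C.image (symbolRead b))
    (forall_mem_image.2 fun x hx => forall_mem_image.2 fun y hy hxy => by
      rw [hammingDist_symbolRead]
      exact hCd x hx y hy (ne_of_apply_ne _ hxy))
    (forall_mem_image.2 fun x hx => (hammingNorm_symbolRead b x).trans (hCw x hx))
  rw [card_image_of_injective _ (symbolRead_injective hb1), hC, Fintype.card_fun,
    Fintype.card_fin, Fintype.card_fin, Nat.cast_pow] at hjohnson
  exact_mod_cast Int.le_floor.2 (by exact_mod_cast (le_div_iff₀ hden).2 hjohnson)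

/-- Corollary 4.4 (restricted Johnson bound for the `b`-symbol distance). -/
theorem restricted_johnson_bound {Fq : Type*} [Field Fq] [Fintype Fq] [DecidableEq Fq]
    {n d w b : ℕ} (hb1 : 1 ≤ b) (hbn : b ≤ n) (hn : 0 < n) (hd : 0 < d) (hw : 0 < w)
    (hden : 0 < (d : ℝ) - 2 * w +
      (Fintype.card Fq : ℝ) ^ b * (w : ℝ) ^ 2 / (((Fintype.card Fq : ℝ) ^ b - 1) * n)) :
    (Awsize Fq n b d w : ℝ) ≤
      ⌊(d : ℝ) / ((d : ℝ) - 2 * w +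
        (Fintype.card Fq : ℝ) ^ b * (w : ℝ) ^ 2 / (((Fintype.card Fq : ℝ) ^ b - 1) * n))⌋ :=
  restricted_johnson_bound_general hb1 hden
end
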